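/- Let f : ℝⁿ → ℝ be μ-strongly convex with L-Lipschitz gradient and minimizer x*. Consider the perturbed gradient iteration x^{k+1} = x^k − γ(∇f(x^k) + e^k) where ‖e^k‖ ≤ ε for all k. If 0 < γ ≤ 2/(μ+L), then for all k, ‖x^k − x*‖ ≤ ρ^k ‖x^0 − x*‖ + γ ε (1 − ρ^k)/(1 − ρ), where ρ = √(1 − 2γμL/(μ+L)) < 1. In particular limsup_k ‖x^k − x*‖ ≤ γ ε/(1 − ρ). -/

import Mathlib

/-!
A `μ`-strongly convex function with `L`-Lipschitz gradient satisfies the interpolation inequality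
`μ L ‖x - y‖² + ‖∇f x - ∇f y‖² ≤ (μ + L) ⟪∇f x - ∇f y, x - y⟫` (Nesterov, Thm 2.1.12): apply
cocoercivity of the gradient of a smooth convex function to `f - μ/2 ‖·‖²`. Expanding the square,
for `0 < γ ≤ 2/(μ + L)` this makes the exact gradient step `x ↦ x - γ ∇f x` a `ρ`-contraction.
Since `∇f x* = 0`, the error `e^k` adds at most `γ ε` per step, so
`‖x^{k+1} - x*‖ ≤ ρ ‖x^k - x*‖ + γ ε`, which unrolls to the geometric bound and its `limsup`.
-/

open Filter
open scoped RealInnerProductSpace NNReal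

section QuadraticBounds

variable {E : Type*} [NormedAddCommGroup E] [InnerProductSpace ℝ E] {f : E → ℝ} {f' : E → E}

theorem norm_sub_sq_le_two_mul_of_quadratic_bounds {M : ℝ} (hM : 0 ≤ M)
    (hlow : ∀ x y, f x + ⟪f' x, y - x⟫ ≤ f y)
    (hup : ∀ x y, f y ≤ f x + ⟪f' x, y - x⟫ + M / 2 * ‖y - x‖ ^ 2) (x y : E) :
    ‖f' x - f' y‖ ^ 2 ≤ 2 * M * (f y - f x - ⟪f' x, y - x⟫) := by
  set d := f' x - f' y
  set D := f y - f x - ⟪f' x, y - x⟫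
  -- compare the lower bound at `x` and the upper bound at `y`, both taken at the point `y + t • d`
  have hquad (t : ℝ) : 0 ≤ (M / 2 * ‖d‖ ^ 2) * (t * t) + (-‖d‖ ^ 2) * t + D := by
    have h1 := hlow x (y + t • d)
    have h2 := hup y (y + t • d)
    have hd : ⟪f' x, d⟫ - ⟪f' y, d⟫ = ‖d‖ ^ 2 := by
      rw [← inner_sub_left, real_inner_self_eq_norm_sq]
    rw [show y + t • d - x = (y - x) + t • d by abel, inner_add_right,
      real_inner_smul_right] at h1
    rw [add_sub_cancel_left, real_inner_smul_right, norm_smul, mul_pow, Real.norm_eq_abs,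
      sq_abs] at h2
    linear_combination h1 + h2 - t * hd
  have hdisc := discrim_le_zero hquad
  rw [discrim] at hdisc
  have hD : 0 ≤ D := by linarith [hlow x y]
  rcases (sq_nonneg ‖d‖).eq_or_lt with h0 | hpos
  · rw [← h0]; positivity
  · nlinarith

theorem norm_sub_sq_le_mul_inner_of_quadratic_bounds {M : ℝ} (hM : 0 ≤ M)
    (hlow : ∀ x y, f x + ⟪f' x, y - x⟫ ≤ f y)
    (hup : ∀ x y, f y ≤ f x + ⟪f' x, y - x⟫ + M / 2 * ‖y - x‖ ^ 2) (x y : E) :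
    ‖f' x - f' y‖ ^ 2 ≤ M * ⟪f' x - f' y, x - y⟫ := by
  have hxy := norm_sub_sq_le_two_mul_of_quadratic_bounds hM hlow hup x y
  have hyx := norm_sub_sq_le_two_mul_of_quadratic_bounds hM hlow hup y x
  rw [norm_sub_rev] at hyx
  have : ⟪f' x - f' y, x - y⟫ = -⟪f' x, y - x⟫ - ⟪f' y, x - y⟫ := by
    rw [inner_sub_left, ← inner_neg_right, neg_sub]
  rw [this]
  linear_combination (hxy + hyx) / 2

theorem add_inner_add_sub_norm_sq (a c m : ℝ) (v x y : E) :
    a - c / 2 * ‖x‖ ^ 2 + ⟪v - c • x, y - x⟫ + (m - c) / 2 * ‖y - x‖ ^ 2 =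
      a + ⟪v, y - x⟫ + m / 2 * ‖y - x‖ ^ 2 - c / 2 * ‖y‖ ^ 2 := by
  have hy : ‖y‖ ^ 2 = ‖x‖ ^ 2 + 2 * ⟪x, y - x⟫ + ‖y - x‖ ^ 2 := by
    rw [← norm_add_sq_real, add_sub_cancel]
  rw [hy, inner_sub_left, real_inner_smul_left]
  ring

theorem mul_norm_sub_sq_add_norm_sub_sq_le_inner {μ L : ℝ}
    (hlow : ∀ x y, f x + ⟪f' x, y - x⟫ + μ / 2 * ‖y - x‖ ^ 2 ≤ f y)
    (hup : ∀ x y, f y ≤ f x + ⟪f' x, y - x⟫ + L / 2 * ‖y - x‖ ^ 2) (x y : E) :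
    μ * L * ‖x - y‖ ^ 2 + ‖f' x - f' y‖ ^ 2 ≤ (μ + L) * ⟪f' x - f' y, x - y⟫ := by
  rcases eq_or_ne x y with rfl | hxy
  · simp
  have hμL : μ ≤ L := by
    have := (hlow x y).trans (hup x y)
    have : 0 < ‖y - x‖ ^ 2 := by positivity [sub_ne_zero.2 hxy.symm]
    nlinarith
  -- `f - μ/2 ‖·‖²` is convex and `(L - μ)`-smooth, so its gradient is cocoercive
  have hco := norm_sub_sq_le_mul_inner_of_quadratic_bounds (f := fun z => f z - μ / 2 * ‖z‖ ^ 2)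
    (f' := fun z => f' z - μ • z) (sub_nonneg.2 hμL)
    (fun x y => by
      have := add_inner_add_sub_norm_sq (f x) μ μ (f' x) x y
      rw [sub_self, zero_div, zero_mul, add_zero] at this
      linarith [hlow x y])
    (fun x y => by linarith [add_inner_add_sub_norm_sq (f x) μ L (f' x) x y, hup x y]) x y
  rw [show f' x - μ • x - (f' y - μ • y) = (f' x - f' y) - μ • (x - y) by module] at hco
  set d := f' x - f' y
  set w := x - y
  have hnorm : ‖d - μ • w‖ ^ 2 = ‖d‖ ^ 2 - 2 * μ * ⟪d, w⟫ + μ ^ 2 * ‖w‖ ^ 2 := by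
    rw [norm_sub_sq_real, real_inner_smul_right, norm_smul, Real.norm_eq_abs, mul_pow, sq_abs]
    ring
  have hinner : ⟪d - μ • w, w⟫ = ⟪d, w⟫ - μ * ‖w‖ ^ 2 := by
    rw [inner_sub_left, real_inner_smul_left, real_inner_self_eq_norm_sq]
  rw [hnorm, hinner] at hco
  linear_combination hco

theorem norm_sub_smul_sub_le {μ L γ : ℝ} (hμL : 0 < μ + L) (hγ0 : 0 ≤ γ)
    (hγ : γ ≤ 2 / (μ + L))
    (h : ∀ x y, μ * L * ‖x - y‖ ^ 2 + ‖f' x - f' y‖ ^ 2 ≤ (μ + L) * ⟪f' x - f' y, x - y⟫)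
    (x y : E) :
    ‖x - γ • f' x - (y - γ • f' y)‖ ≤ √(1 - 2 * γ * μ * L / (μ + L)) * ‖x - y‖ := by
  have hsq : ‖x - γ • f' x - (y - γ • f' y)‖ ^ 2 ≤
      (1 - 2 * γ * μ * L / (μ + L)) * ‖x - y‖ ^ 2 := by
    rw [show x - γ • f' x - (y - γ • f' y) = (x - y) - γ • (f' x - f' y) by module,
      norm_sub_sq_real, real_inner_smul_right, norm_smul, Real.norm_eq_abs, mul_pow, sq_abs,
      real_inner_comm]
    have hγ' : 0 ≤ 2 - γ * (μ + L) := by linarith [(le_div_iff₀ hμL).1 hγ]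
    have hfactor : (1 - 2 * γ * μ * L / (μ + L)) * ‖x - y‖ ^ 2 =
        ((μ + L) - 2 * γ * μ * L) * ‖x - y‖ ^ 2 / (μ + L) := by
      field_simp
    rw [hfactor, le_div_iff₀ hμL]
    nlinarith [mul_le_mul_of_nonneg_left (h x y) (by positivity : (0 : ℝ) ≤ 2 * γ),
      mul_nonneg (mul_nonneg hγ0 (sq_nonneg ‖f' x - f' y‖)) hγ']
  calc ‖x - γ • f' x - (y - γ • f' y)‖ = √(‖x - γ • f' x - (y - γ • f' y)‖ ^ 2) :=
        (Real.sqrt_sq (norm_nonneg _)).symm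
    _ ≤ √((1 - 2 * γ * μ * L / (μ + L)) * ‖x - y‖ ^ 2) := Real.sqrt_le_sqrt hsq
    _ = √(1 - 2 * γ * μ * L / (μ + L)) * ‖x - y‖ := by
      rw [Real.sqrt_mul' _ (sq_nonneg _), Real.sqrt_sq (norm_nonneg _)]

end QuadraticBounds

section Gradient

variable {E : Type*} [NormedAddCommGroup E] [InnerProductSpace ℝ E] [CompleteSpace E]
  {f : E → ℝ} {f' : E} {x y : E}

theorem IsLocalMin.hasGradientAt_eq_zero (h : IsLocalMin f x) (hf : HasGradientAt f f' x) :
    f' = 0 := by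
  simpa using h.hasFDerivAt_eq_zero hf.hasFDerivAt

theorem HasGradientAt.hasDerivAt_lineMap {t : ℝ}
    (hf : HasGradientAt f f' (AffineMap.lineMap x y t)) :
    HasDerivAt (fun s : ℝ => f (AffineMap.lineMap x y s)) ⟪f', y - x⟫ t := by
  have h := hf.hasFDerivAt.comp_hasDerivAt t AffineMap.hasDerivAt_lineMap
  simp only [InnerProductSpace.toDual_apply_apply] at h
  exact h

theorem ConvexOn.add_inner_le_of_hasGradientAt (hf : ConvexOn ℝ Set.univ f)
    (hx : HasGradientAt f f' x) (y : E) : f x + ⟪f', y - x⟫ ≤ f y := by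
  have hline := (hf.comp_affineMap (AffineMap.lineMap x y)).le_slope_of_hasDerivAt
    (Set.mem_univ 0) (Set.mem_univ 1) zero_lt_one
    (HasGradientAt.hasDerivAt_lineMap (by simpa using hx))
  simp only [slope_def_field, Function.comp_apply, AffineMap.lineMap_apply_one,
    AffineMap.lineMap_apply_zero, sub_zero, div_one] at hline
  linarith

theorem StrongConvexOn.add_inner_add_le_of_hasGradientAt {μ : ℝ}
    (hf : StrongConvexOn Set.univ μ f) (hx : HasGradientAt f f' x) (y : E) :
    f x + ⟪f', y - x⟫ + μ / 2 * ‖y - x‖ ^ 2 ≤ f y := by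
  have hg : HasGradientAt (fun z => f z - μ / 2 * ‖z‖ ^ 2) (f' - μ • x) x := by
    rw [hasGradientAt_iff_hasFDerivAt] at hx ⊢
    refine (hx.fun_sub ((hasStrictFDerivAt_norm_sq x).hasFDerivAt.const_mul (μ / 2))
      |>.congr_fderiv ?_)
    ext v
    simp only [sub_apply, InnerProductSpace.toDual_apply_apply,
      smul_apply, coe_innerSL_apply, nsmul_eq_mul, Nat.cast_ofNat,
      smul_eq_mul, map_sub, map_smul, sub_right_inj]
    ring
  have h := (strongConvexOn_iff_convex.1 hf).add_inner_le_of_hasGradientAt hg y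
  have := add_inner_add_sub_norm_sq (f x) μ μ f' x y
  rw [sub_self, zero_div, zero_mul, add_zero] at this
  linarith

theorem LipschitzWith.le_add_inner_add_of_hasGradientAt {f' : E → E} {K : ℝ≥0}
    (hlip : LipschitzWith K f') (hf : ∀ z, HasGradientAt f (f' z) z) (x y : E) :
    f y ≤ f x + ⟪f' x, y - x⟫ + K / 2 * ‖y - x‖ ^ 2 := by
  set ψ : ℝ → ℝ := fun t =>
    f (AffineMap.lineMap x y t) - t * ⟪f' x, y - x⟫ - K / 2 * ‖y - x‖ ^ 2 * t ^ 2
  have hψ (t : ℝ) : HasDerivAt ψ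
      (⟪f' (AffineMap.lineMap x y t) - f' x, y - x⟫ - K * ‖y - x‖ ^ 2 * t) t := by
    have := (((hf (AffineMap.lineMap x y t)).hasDerivAt_lineMap).fun_sub
      ((hasDerivAt_id t).mul_const ⟪f' x, y - x⟫)).fun_sub
      ((hasDerivAt_pow 2 t).const_mul (K / 2 * ‖y - x‖ ^ 2))
    refine this.congr_deriv ?_
    simp only [one_mul, Nat.cast_ofNat, Nat.add_one_sub_one, pow_one, inner_sub_left,
      sub_right_inj]
    ring
  have hψ_nonpos (t : ℝ) (ht : 0 ≤ t) :
      ⟪f' (AffineMap.lineMap x y t) - f' x, y - x⟫ - K * ‖y - x‖ ^ 2 * t ≤ 0 := by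
    have hdist : ‖f' (AffineMap.lineMap x y t) - f' x‖ ≤ K * (t * ‖y - x‖) := by
      simpa [← dist_eq_norm, dist_lineMap_left, Real.norm_of_nonneg ht, dist_comm x y]
        using hlip.dist_le_mul (AffineMap.lineMap x y t) x
    nlinarith [real_inner_le_norm (f' (AffineMap.lineMap x y t) - f' x) (y - x),
      mul_le_mul_of_nonneg_right hdist (norm_nonneg (y - x))]
  have hanti : AntitoneOn ψ (Set.Icc 0 1) := by
    refine antitoneOn_of_deriv_nonpos (convex_Icc 0 1)
      (fun t _ => (hψ t).continuousAt.continuousWithinAt)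
      (fun t _ => (hψ t).differentiableAt.differentiableWithinAt) fun t ht => ?_
    rw [interior_Icc] at ht
    exact (hψ t).deriv ▸ hψ_nonpos t ht.1.le
  have := hanti (Set.left_mem_Icc.2 zero_le_one) (Set.right_mem_Icc.2 zero_le_one) zero_le_one
  simp only [ψ, AffineMap.lineMap_apply_one, AffineMap.lineMap_apply_zero, one_mul, one_pow,
    mul_one, zero_mul, sub_zero, ne_eq, OfNat.ofNat_ne_zero, not_false_eq_true, zero_pow,
    mul_zero] at this
  linarith

end Gradient

section Recursion

variable {u : ℕ → ℝ} {ρ c : ℝ}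

theorem le_pow_mul_add_of_le_mul_add (hρ0 : 0 ≤ ρ) (hρ1 : ρ ≠ 1)
    (h : ∀ k, u (k + 1) ≤ ρ * u k + c) (k : ℕ) :
    u k ≤ ρ ^ k * u 0 + c * (1 - ρ ^ k) / (1 - ρ) := by
  induction k with
  | zero => simp
  | succ k ih =>
    have h1ρ : 1 - ρ ≠ 0 := sub_ne_zero.2 hρ1.symm
    calc u (k + 1) ≤ ρ * u k + c := h k
      _ ≤ ρ * (ρ ^ k * u 0 + c * (1 - ρ ^ k) / (1 - ρ)) + c := by gcongr
      _ = ρ ^ (k + 1) * u 0 + c * (1 - ρ ^ (k + 1)) / (1 - ρ) := by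
        field_simp
        ring

theorem limsup_le_of_le_mul_add (hu : ∀ k, 0 ≤ u k) (hρ0 : 0 ≤ ρ) (hρ1 : ρ < 1)
    (h : ∀ k, u (k + 1) ≤ ρ * u k + c) : limsup u atTop ≤ c / (1 - ρ) := by
  have hpow := tendsto_pow_atTop_nhds_zero_of_lt_one hρ0 hρ1
  have hlim : Tendsto (fun k => ρ ^ k * u 0 + c * (1 - ρ ^ k) / (1 - ρ)) atTop
      (nhds (c / (1 - ρ))) := by
    simpa using (hpow.mul_const (u 0)).add
      ((((tendsto_const_nhds (x := (1 : ℝ))).sub hpow).const_mul c).div_const (1 - ρ))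
  calc limsup u atTop ≤ limsup (fun k => ρ ^ k * u 0 + c * (1 - ρ ^ k) / (1 - ρ)) atTop :=
        limsup_le_limsup (Eventually.of_forall (le_pow_mul_add_of_le_mul_add hρ0 hρ1.ne h))
          (isCoboundedUnder_le_of_le atTop hu) hlim.isBoundedUnder_le
    _ = c / (1 - ρ) := hlim.limsup_eq

end Recursion

theorem stmt_8_general {n : ℕ} (f : EuclideanSpace ℝ (Fin n) → ℝ)
    (f' : EuclideanSpace ℝ (Fin n) → EuclideanSpace ℝ (Fin n))
    (μ L γ ε : ℝ) (hμ : 0 < μ) (hL : 0 < L)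
    (hgrad : ∀ x, HasGradientAt f (f' x) x)
    (hsc : StrongConvexOn Set.univ μ f)
    (hlip : LipschitzWith L.toNNReal f')
    (xstar : EuclideanSpace ℝ (Fin n))
    (hmin : ∀ x, f xstar ≤ f x)
    (hγ0 : 0 < γ) (hγ : γ ≤ 2 / (μ + L))
    (x : ℕ → EuclideanSpace ℝ (Fin n))
    (e : ℕ → EuclideanSpace ℝ (Fin n))
    (he : ∀ k, ‖e k‖ ≤ ε)
    (hiter : ∀ k, x (k + 1) = x k - γ • (f' (x k) + e k)) :
    Real.sqrt (1 - 2 * γ * μ * L / (μ + L)) < 1 ∧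
    (∀ k, ‖x k - xstar‖ ≤
        Real.sqrt (1 - 2 * γ * μ * L / (μ + L)) ^ k * ‖x 0 - xstar‖ +
          γ * ε * (1 - Real.sqrt (1 - 2 * γ * μ * L / (μ + L)) ^ k) /
            (1 - Real.sqrt (1 - 2 * γ * μ * L / (μ + L)))) ∧
    limsup (fun k => ‖x k - xstar‖) atTop ≤
      γ * ε / (1 - Real.sqrt (1 - 2 * γ * μ * L / (μ + L))) := by
  set ρ := √(1 - 2 * γ * μ * L / (μ + L))
  have hlow (p q) := hsc.add_inner_add_le_of_hasGradientAt (hgrad p) q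
  have hup (p q) : f q ≤ f p + ⟪f' p, q - p⟫ + L / 2 * ‖q - p‖ ^ 2 :=
    Real.coe_toNNReal L hL.le ▸ hlip.le_add_inner_add_of_hasGradientAt hgrad p q
  have hcontr := norm_sub_smul_sub_le (by positivity) hγ0.le hγ
    (mul_norm_sub_sq_add_norm_sub_sq_le_inner hlow hup)
  have hstar : f' xstar = 0 :=
    IsLocalMin.hasGradientAt_eq_zero (Eventually.of_forall hmin) (hgrad xstar)
  have hρ0 : 0 ≤ ρ := Real.sqrt_nonneg _
  have hρ1 : ρ < 1 := by
    rw [Real.sqrt_lt' one_pos]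
    have : 0 < 2 * γ * μ * L / (μ + L) := by positivity
    linarith
  have hstep (k : ℕ) : ‖x (k + 1) - xstar‖ ≤ ρ * ‖x k - xstar‖ + γ * ε := by
    calc ‖x (k + 1) - xstar‖
        = ‖x k - γ • f' (x k) - (xstar - γ • f' xstar) - γ • e k‖ := by
          rw [hiter, hstar]
          congr 1
          module
      _ ≤ ‖x k - γ • f' (x k) - (xstar - γ • f' xstar)‖ + ‖γ • e k‖ := norm_sub_le _ _
      _ ≤ ρ * ‖x k - xstar‖ + γ * ε := by
          rw [norm_smul, Real.norm_of_nonneg hγ0.le]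
          gcongr
          exacts [hcontr _ _, he k]
  exact ⟨hρ1, le_pow_mul_add_of_le_mul_add hρ0 hρ1.ne hstep,
    limsup_le_of_le_mul_add (fun k => norm_nonneg _) hρ0 hρ1 hstep⟩

/-- Perturbed gradient descent with bounded gradient error `‖e^k‖ ≤ ε`
converges linearly to a neighborhood of the minimizer:
`‖x^k - x*‖ ≤ ρ^k ‖x^0 - x*‖ + γε(1-ρ^k)/(1-ρ)` with
`ρ = √(1 - 2γμL/(μ+L)) < 1`, and `limsup_k ‖x^k - x*‖ ≤ γε/(1-ρ)`. -/
theorem stmt_8 {n : ℕ} (f : EuclideanSpace ℝ (Fin n) → ℝ)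
    (f' : EuclideanSpace ℝ (Fin n) → EuclideanSpace ℝ (Fin n))
    (μ L γ ε : ℝ) (hμ : 0 < μ) (hL : 0 < L) (hε : 0 ≤ ε)
    (hgrad : ∀ x, HasGradientAt f (f' x) x)
    (hsc : StrongConvexOn Set.univ μ f)
    (hlip : LipschitzWith L.toNNReal f')
    (xstar : EuclideanSpace ℝ (Fin n))
    (hmin : ∀ x, f xstar ≤ f x)
    (hγ0 : 0 < γ) (hγ : γ ≤ 2 / (μ + L))
    (x : ℕ → EuclideanSpace ℝ (Fin n))
    (e : ℕ → EuclideanSpace ℝ (Fin n))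
    (he : ∀ k, ‖e k‖ ≤ ε)
    (hiter : ∀ k, x (k + 1) = x k - γ • (f' (x k) + e k)) :
    Real.sqrt (1 - 2 * γ * μ * L / (μ + L)) < 1 ∧
    (∀ k, ‖x k - xstar‖ ≤
        Real.sqrt (1 - 2 * γ * μ * L / (μ + L)) ^ k * ‖x 0 - xstar‖ +
          γ * ε * (1 - Real.sqrt (1 - 2 * γ * μ * L / (μ + L)) ^ k) /
            (1 - Real.sqrt (1 - 2 * γ * μ * L / (μ + L)))) ∧
    limsup (fun k => ‖x k - xstar‖) atTop ≤
      γ * ε / (1 - Real.sqrt (1 - 2 * γ * μ * L / (μ + L))) :=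
  stmt_8_general f f' μ L γ ε hμ hL hgrad hsc hlip xstar hmin hγ0 hγ x e he hiter
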